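/- arXiv:2403.16484 — 2 statements merged into one kernel-verified Lean document; each statement's English description precedes it below -/
import Mathlib

section
/- For every integer k ≥ 1, there exists a 5 × (2k+1) matrix A whose entries form a bijection with the set {1, 2, …, 10k+5} such that: (i) in every column the sum of the entries in rows 1, 2, 3 equals 9k+6; (ii) in every column the sum of the entries in rows 1 and 4 equals 10k+6, and the sum of the entries in rows 2 and 5 equals 10k+6; and (iii) the column sums of the entries in rows 3, 4, 5, taken over the 2k+1 columns, are exactly the 2k+1 numbers 19k+12, 19k+14, 19k+16, …, 23k+12 (each attained by exactly one column). -/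
namespace LocalAntimagic

/-- Auxiliary permutation of `{0, …, 2k}`. -/
def pi' (k j : ℕ) : ℕ := if j ≤ k then k + j else j - (k + 1)

lemma pi'_char (k j : ℕ) :
    (j ≤ k ∧ pi' k j = k + j) ∨ (k < j ∧ pi' k j = j - (k + 1)) := by
  unfold pi'; split <;> omega

lemma pi'_surj (k w : ℕ) (hw : w ≤ 2 * k) : ∃ j, j ≤ 2 * k ∧ pi' k j = w := by
  by_cases h : k ≤ w
  · exact ⟨w - k, by omega, by unfold pi'; split <;> omega⟩
  · exact ⟨w + k + 1, by omega, by unfold pi'; split <;> omega⟩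

lemma s_surj (k v : ℕ) (h1 : k ≤ v) (h2 : v ≤ 3 * k) :
    ∃ j, j ≤ 2 * k ∧ j + pi' k j = v := by
  obtain ⟨m, hm⟩ : ∃ m, v = k + 2 * m ∨ v = k + 2 * m + 1 := ⟨(v - k) / 2, by omega⟩
  rcases hm with h | h
  · exact ⟨m, by omega, by unfold pi'; split <;> omega⟩
  · exact ⟨k + 1 + m, by omega, by unfold pi'; split <;> omega⟩

/-- The entry of the matrix in row `i`, column `j` (as a function on `ℕ`). -/
def Arow (k i j : ℕ) : ℕ :=
  if i = 0 then j + 1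
  else if i = 1 then 2 * k + 2 + pi' k j
  else if i = 2 then 7 * k + 3 - (j + pi' k j)
  else if i = 3 then 10 * k + 5 - j
  else 8 * k + 4 - pi' k j

@[simp] lemma Arow0 (k j : ℕ) : Arow k 0 j = j + 1 := rfl
@[simp] lemma Arow1 (k j : ℕ) : Arow k 1 j = 2 * k + 2 + pi' k j := rfl
@[simp] lemma Arow2 (k j : ℕ) : Arow k 2 j = 7 * k + 3 - (j + pi' k j) := rfl
@[simp] lemma Arow3 (k j : ℕ) : Arow k 3 j = 10 * k + 5 - j := rfl
@[simp] lemma Arow4 (k j : ℕ) : Arow k 4 j = 8 * k + 4 - pi' k j := rfl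

/-- For every `k ≥ 1` there is a `5 × (2k+1)` matrix with entries bijective
onto `{1, …, 10k+5}` such that every column sums to `9k+6` on rows 1–3,
rows 1,4 and rows 2,5 sum to `10k+6` in every column, and the column sums of
rows 3,4,5 are exactly `19k+12, 19k+14, …, 23k+12`. -/
theorem matrix5_exists (k : ℕ) (hk : 1 ≤ k) :
    ∃ A : Fin 5 → Fin (2 * k + 1) → ℕ,
      Set.BijOn (fun q : Fin 5 × Fin (2 * k + 1) => A q.1 q.2) Set.univ
        (Set.Icc 1 (10 * k + 5)) ∧
      (∀ j, A 0 j + A 1 j + A 2 j = 9 * k + 6) ∧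
      (∀ j, A 0 j + A 3 j = 10 * k + 6 ∧ A 1 j + A 4 j = 10 * k + 6) ∧
      Set.BijOn (fun j : Fin (2 * k + 1) => A 2 j + A 3 j + A 4 j) Set.univ
        {m : ℕ | ∃ t : ℕ, t ≤ 2 * k ∧ m = 19 * k + 12 + 2 * t} := by
  refine ⟨fun i j => Arow k i.val j.val, ⟨?_, ?_, ?_⟩, ?_, ?_, ⟨?_, ?_, ?_⟩⟩
  · -- MapsTo for the big bijection
    rintro ⟨i, j⟩ -
    have hj := j.isLt
    have hc := pi'_char k j.val
    simp only [Set.mem_Icc]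
    fin_cases i <;>
      simp only [Arow0, Arow1, Arow2, Arow3, Arow4] <;> omega
  · -- InjOn
    rintro ⟨i1, j1⟩ - ⟨i2, j2⟩ - h
    have hj1 := j1.isLt
    have hj2 := j2.isLt
    have hc1 := pi'_char k j1.val
    have hc2 := pi'_char k j2.val
    simp only at h
    obtain ⟨i1, hi1⟩ := i1
    obtain ⟨i2, hi2⟩ := i2
    interval_cases i1 <;> interval_cases i2 <;>
      simp only [Arow0, Arow1, Arow2, Arow3, Arow4] at h <;>
      simp only [Prod.mk.injEq, Fin.mk.injEq, Fin.ext_iff] <;>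
      first
        | omega
        | exact ⟨trivial, by omega⟩
  · -- SurjOn
    intro v hv
    simp only [Set.mem_Icc] at hv
    simp only [Set.image_univ, Set.mem_range]
    by_cases c0 : v ≤ 2 * k + 1
    · exact ⟨((⟨0, by omega⟩ : Fin 5), ⟨v - 1, by omega⟩),
        show v - 1 + 1 = v by omega⟩
    by_cases c1 : v ≤ 4 * k + 2
    · obtain ⟨j, hj, hpj⟩ := pi'_surj k (v - (2 * k + 2)) (by omega)
      exact ⟨((⟨1, by omega⟩ : Fin 5), ⟨j, by omega⟩),
        show 2 * k + 2 + pi' k j = v by omega⟩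
    by_cases c2 : v ≤ 6 * k + 3
    · obtain ⟨j, hj, hsj⟩ := s_surj k (7 * k + 3 - v) (by omega) (by omega)
      exact ⟨((⟨2, by omega⟩ : Fin 5), ⟨j, by omega⟩),
        show 7 * k + 3 - (j + pi' k j) = v by omega⟩
    by_cases c3 : v ≤ 8 * k + 4
    · obtain ⟨j, hj, hpj⟩ := pi'_surj k (8 * k + 4 - v) (by omega)
      exact ⟨((⟨4, by omega⟩ : Fin 5), ⟨j, by omega⟩),
        show 8 * k + 4 - pi' k j = v by omega⟩
    · exact ⟨((⟨3, by omega⟩ : Fin 5), ⟨10 * k + 5 - v, by omega⟩),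
        show 10 * k + 5 - (10 * k + 5 - v) = v by omega⟩
  · -- column sums rows 1-3
    intro j
    have hj := j.isLt
    have hc := pi'_char k j.val
    show Arow k 0 j.val + Arow k 1 j.val + Arow k 2 j.val = 9 * k + 6
    simp only [Arow0, Arow1, Arow2]
    omega
  · -- rows 1,4 and 2,5
    intro j
    have hj := j.isLt
    have hc := pi'_char k j.val
    constructor
    · show Arow k 0 j.val + Arow k 3 j.val = 10 * k + 6
      simp only [Arow0, Arow3]; omega
    · show Arow k 1 j.val + Arow k 4 j.val = 10 * k + 6
      simp only [Arow1, Arow4]; omega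
  · -- MapsTo for row-345 sums
    rintro j -
    have hj := j.isLt
    have hc := pi'_char k j.val
    refine ⟨3 * k - (j.val + pi' k j.val), by omega, ?_⟩
    show Arow k 2 j.val + Arow k 3 j.val + Arow k 4 j.val = _
    simp only [Arow2, Arow3, Arow4]
    omega
  · -- InjOn for row-345 sums
    rintro j1 - j2 - h
    have hj1 := j1.isLt
    have hj2 := j2.isLt
    have hc1 := pi'_char k j1.val
    have hc2 := pi'_char k j2.val
    have h' : Arow k 2 j1.val + Arow k 3 j1.val + Arow k 4 j1.val =
        Arow k 2 j2.val + Arow k 3 j2.val + Arow k 4 j2.val := h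
    simp only [Arow2, Arow3, Arow4] at h'
    exact Fin.ext (by omega)
  · -- SurjOn for row-345 sums
    rintro m ⟨t, ht, rfl⟩
    obtain ⟨j, hj, hsj⟩ := s_surj k (3 * k - t) (by omega) (by omega)
    have hc := pi'_char k j
    simp only [Set.image_univ, Set.mem_range]
    refine ⟨⟨j, by omega⟩, ?_⟩
    show Arow k 2 j + Arow k 3 j + Arow k 4 j = _
    simp only [Arow2, Arow3, Arow4]
    omega

end LocalAntimagic
end

section
/- For every integer k ≥ 1, there exists an 11 × (2k+1) matrix A whose entries form a bijection with the set {1, 2, …, 22k+11} such that: (i) in every column the sum of the entries in rows 1 through 5 equals 25k+15; (ii) in every column the sum of the entries in rows 1, 6, 7, 8 equals 50k+27, and the sum of the entries in rows 2, 9, 10, 11 equals 50k+27; and (iii) for each a ∈ {1, 2, 3}, the sum of all entries in rows 2+a, 5+a, and 8+a (over all 2k+1 columns) equals (2k+1)(39k+21). -/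
/-!
Cut `{1, …, 11(2k+1)}` into eleven blocks of `2k+1` consecutive integers and let each row run
through its own block, in the column order given by a permutation of `{0, …, 2k}`. Such a matrix
is automatically a bijection onto `{1, …, 22k+11}`, and since the total of a row depends only on its
block, (iii) only constrains the block indices. With the identity or the reversal as permutation in
all rows but two, the column conditions hold identically once increasing and decreasing rows are
balanced; the remaining two rows need permutations `p`, `q` of `{0, …, 2k}` with
`j + p j + q j = 3k`, i.e. the rows of a `3 × (2k+1)` magic rectangle.
-/

namespace LocalAntimagic

open Finset

section Blocks

variable {ι : Type*} {m n : ℕ}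

theorem bijOn_val_add_one (N : ℕ) :
    Set.BijOn (fun x : Fin N => (x : ℕ) + 1) Set.univ (Set.Icc 1 N) := by
  refine ⟨fun x _ => ⟨Nat.le_add_left 1 x, x.isLt⟩,
    fun x _ y _ h => Fin.ext (by simpa using h), ?_⟩
  intro y ⟨hy₁, hy₂⟩
  exact ⟨⟨y - 1, by omega⟩, Set.mem_univ _, by simp only; omega⟩

theorem bijOn_blocks (b : ι ≃ Fin m) (σ : ι → Equiv.Perm (Fin n)) :
    Set.BijOn (fun q : ι × Fin n => (σ q.1 q.2 : ℕ) + n * b q.1 + 1) Set.univ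
      (Set.Icc 1 (m * n)) :=
  (bijOn_val_add_one (m * n)).comp
    (Set.bijOn_univ.mpr ((Equiv.prodShear b σ).trans finProdFinEquiv).bijective)

theorem sum_blocks (b : ι → ℕ) (σ : Equiv.Perm (Fin n)) (i : ι) :
    ∑ j, ((σ j : ℕ) + n * b i + 1) = ∑ j : Fin n, (j : ℕ) + n * (n * b i + 1) := by
  rw [sum_add_distrib, sum_add_distrib, Equiv.sum_comp σ (fun j => (j : ℕ))]
  simp only [sum_const, card_univ, Fintype.card_fin, smul_eq_mul]
  ring

end Blocks

theorem sum_fin_val_odd (k : ℕ) : ∑ j : Fin (2 * k + 1), (j : ℕ) = k * (2 * k + 1) := by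
  rw [Fin.sum_univ_eq_sum_range (fun j => j), sum_range_id, Nat.add_sub_cancel,
    mul_comm, mul_assoc, Nat.mul_div_cancel_left _ two_pos]

section MagicRectangle

variable (k : ℕ)

def magicFstFun (j : Fin (2 * k + 1)) : Fin (2 * k + 1) :=
  ⟨if (j : ℕ) % 2 = 0 then k - j / 2 else 2 * k - j / 2, by
    have := j.isLt; split_ifs <;> omega⟩

def magicSndFun (j : Fin (2 * k + 1)) : Fin (2 * k + 1) :=
  ⟨if (j : ℕ) % 2 = 0 then 2 * k - j / 2 else k - 1 - j / 2, by
    have := j.isLt; split_ifs <;> omega⟩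

theorem magicFstFun_injective : Function.Injective (magicFstFun k) := by
  intro i j h
  simp only [magicFstFun, Fin.mk.injEq] at h
  have := i.isLt
  have := j.isLt
  ext
  split_ifs at h <;> omega

theorem magicSndFun_injective : Function.Injective (magicSndFun k) := by
  intro i j h
  simp only [magicSndFun, Fin.mk.injEq] at h
  have := i.isLt
  have := j.isLt
  ext
  split_ifs at h <;> omega

noncomputable def magicFst : Equiv.Perm (Fin (2 * k + 1)) :=
  Equiv.ofBijective _ (Finite.injective_iff_bijective.mp (magicFstFun_injective k))

noncomputable def magicSnd : Equiv.Perm (Fin (2 * k + 1)) :=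
  Equiv.ofBijective _ (Finite.injective_iff_bijective.mp (magicSndFun_injective k))

theorem val_add_magicFst_add_magicSnd (j : Fin (2 * k + 1)) :
    (j : ℕ) + magicFst k j + magicSnd k j = 3 * k := by
  simp only [magicFst, magicSnd, Equiv.ofBijective_apply, magicFstFun, magicSndFun]
  have := j.isLt
  split_ifs <;> omega

end MagicRectangle

/-- Rows `0, …, 4` get blocks of index sum `10`; rows `0, 5, 6, 7` and `1, 8, 9, 10` (two
increasing and two decreasing rows each, see `rowPerm`) get index sum `23`; rows `2+a, 5+a, 8+a`
get `18`. -/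
noncomputable def block : Fin 11 ≃ Fin 11 :=
  Equiv.ofBijective ![0, 1, 2, 3, 4, 10, 8, 5, 6, 7, 9] (by decide)

theorem block_add_block_add_block (a : Fin 3) :
    (block ⟨2 + a.1, by omega⟩ : ℕ) + block ⟨5 + a.1, by omega⟩ + block ⟨8 + a.1, by omega⟩
      = 18 := by
  fin_cases a <;> rfl

noncomputable def rowPerm (k : ℕ) : Fin 11 → Equiv.Perm (Fin (2 * k + 1)) :=
  ![1, Fin.revPerm, 1, magicFst k, magicSnd k, Fin.revPerm, Fin.revPerm, 1, 1, 1, Fin.revPerm]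

noncomputable def matrix11 (k : ℕ) (i : Fin 11) (j : Fin (2 * k + 1)) : ℕ :=
  (rowPerm k i j : ℕ) + (2 * k + 1) * block i + 1

theorem sum_matrix11_row (k : ℕ) (i : Fin 11) :
    ∑ j, matrix11 k i j = k * (2 * k + 1) + (2 * k + 1) * ((2 * k + 1) * block i + 1) := by
  rw [← sum_fin_val_odd]
  exact sum_blocks (fun i => (block i : ℕ)) (rowPerm k i) i

/-- For every `k ≥ 1` there is an `11 × (2k+1)` matrix with entries bijective
onto `{1, …, 22k+11}` such that every column sums to `25k+15` on rows 1–5,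
rows 1,6,7,8 and rows 2,9,10,11 sum to `50k+27` in every column, and for each
`a ∈ {1,2,3}` the total sum of rows `2+a, 5+a, 8+a` is `(2k+1)(39k+21)`. -/
theorem matrix11_exists (k : ℕ) :
    ∃ A : Fin 11 → Fin (2 * k + 1) → ℕ,
      Set.BijOn (fun q : Fin 11 × Fin (2 * k + 1) => A q.1 q.2) Set.univ
        (Set.Icc 1 (22 * k + 11)) ∧
      (∀ j, A 0 j + A 1 j + A 2 j + A 3 j + A 4 j = 25 * k + 15) ∧
      (∀ j, A 0 j + A 5 j + A 6 j + A 7 j = 50 * k + 27 ∧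
            A 1 j + A 8 j + A 9 j + A 10 j = 50 * k + 27) ∧
      (∀ a : Fin 3, ∑ j : Fin (2 * k + 1),
          (A ⟨2 + a.1, by have := a.isLt; omega⟩ j +
           A ⟨5 + a.1, by have := a.isLt; omega⟩ j +
           A ⟨8 + a.1, by have := a.isLt; omega⟩ j) = (2 * k + 1) * (39 * k + 21)) := by
  refine ⟨matrix11 k, ?_, fun j => ?_, fun j => ?_, fun a => ?_⟩
  · rw [show 22 * k + 11 = 11 * (2 * k + 1) by ring]
    exact bijOn_blocks block (rowPerm k)
  · have := val_add_magicFst_add_magicSnd k j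
    simp only [matrix11, rowPerm, block, Equiv.ofBijective_apply, Matrix.cons_val,
      Equiv.Perm.coe_one, id_eq, Fin.revPerm_apply, Fin.val_rev]
    omega
  · simp only [matrix11, rowPerm, block, Equiv.ofBijective_apply, Matrix.cons_val,
      Equiv.Perm.coe_one, id_eq, Fin.revPerm_apply, Fin.val_rev]
    omega
  · simp only [sum_add_distrib, sum_matrix11_row]
    calc _ = 3 * (k * (2 * k + 1)) + (2 * k + 1) * ((2 * k + 1) *
            ((block ⟨2 + a.1, _⟩ : ℕ) + block ⟨5 + a.1, _⟩ + block ⟨8 + a.1, _⟩) + 3) := by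
          ring
      _ = _ := by rw [block_add_block_add_block]; ring
end LocalAntimagic
end
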